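/- arXiv:1809.01606 — 3 statements merged into one kernel-verified Lean document; each statement's English description precedes it below -/
import Mathlib

section
/- Suppose for each C̄ with C ⊆ C̄ ⊆ D, the function t ↦ pr(min_{i∈C̄} X_i > t, max_{j∈D\C̄} X_j ≤ t) is regularly varying at infinity with index −1/τ_{C̄}, and t ↦ pr(min_{i∈C} X_i > t) is regularly varying with index −1/η_C. Then η_C = max over C̄ ⊇ C of τ_{C̄}. -/
/-! Each event `{min_{C̄} X > t, max_{D \ C̄} X ≤ t}` is contained in `{min_C X > t}`, and the
latter is covered by these events (take `C̄ = {j | X_j > t}`). The first fact forces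
`τ_{C̄} ≤ η` for every `C̄`: a smaller regularly varying function cannot have a larger index,
since the ratio of the two would grow geometrically along `t, 2t, 4t, …` while staying
bounded. The second gives `pr(min_C X > tx) ≤ 2 N x^{-1/τ_max} pr(min_C X > t)` for large
`t`, with `N` the number of sets `C̄`; letting `t → ∞` and then `x → ∞` gives `η ≤ τ_max`. -/

open Filter MeasureTheory

/-- `λ ∈ RV_α`: regular variation at infinity with index `α`. -/
def RegVary (f : ℝ → ℝ) (α : ℝ) : Prop :=
  ∀ x : ℝ, 0 < x → Tendsto (fun t => f (t * x) / f t) atTop (nhds (x ^ α))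

open Topology

lemma le_one_of_tendsto_ratio_two {r : ℝ → ℝ} {L M : ℝ}
    (hpos : ∀ᶠ t in atTop, 0 < r t) (hbdd : ∀ᶠ t in atTop, r t ≤ M)
    (hL : Tendsto (fun t => r (t * 2) / r t) atTop (𝓝 L)) : L ≤ 1 := by
  by_contra! hL1
  obtain ⟨q, hq, hqL⟩ := exists_between hL1
  have hratio : ∀ᶠ t in atTop, q ≤ r (t * 2) / r t := hL.eventually (eventually_ge_nhds hqL)
  obtain ⟨T, hT⟩ :=
    (hpos.and (hbdd.and (hratio.and (eventually_ge_atTop 1)))).exists_forall_of_atTop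
  obtain ⟨hrT, -, -, hT1⟩ := hT T le_rfl
  have hT_le (n : ℕ) : T ≤ T * 2 ^ n :=
    le_mul_of_one_le_right (by linarith) (one_le_pow₀ one_le_two)
  have hgrowth (n : ℕ) : q ^ n * r T ≤ r (T * 2 ^ n) := by
    induction n with
    | zero => simp
    | succ n ih =>
      obtain ⟨hpos_n, -, hratio_n, -⟩ := hT _ (hT_le n)
      calc q ^ (n + 1) * r T = q * (q ^ n * r T) := by ring
        _ ≤ q * r (T * 2 ^ n) := by gcongr
        _ ≤ r (T * 2 ^ n * 2) := (le_div_iff₀ hpos_n).mp hratio_n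
        _ = r (T * 2 ^ (n + 1)) := by rw [pow_succ, mul_assoc]
  have hunbdd : Tendsto (fun n : ℕ => r (T * 2 ^ n)) atTop atTop :=
    tendsto_atTop_mono hgrowth ((tendsto_pow_atTop_atTop_of_one_lt hq).atTop_mul_const hrT)
  obtain ⟨n, hn⟩ := (hunbdd.eventually_gt_atTop M).exists
  exact (hT _ (hT_le n)).2.1.not_gt hn

lemma le_of_eventually_rpow_le_mul_rpow {α β K : ℝ}
    (h : ∀ᶠ x in atTop, x ^ α ≤ K * x ^ β) : α ≤ β := by
  by_contra! hβα
  have hbig : ∀ᶠ x : ℝ in atTop, K < x ^ (α - β) :=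
    (tendsto_rpow_atTop (sub_pos.mpr hβα)).eventually_gt_atTop K
  obtain ⟨x, hx, hxK, hxpos⟩ := (h.and (hbig.and (eventually_gt_atTop 0))).exists
  have hsplit : x ^ α = x ^ (α - β) * x ^ β := by rw [← Real.rpow_add hxpos, sub_add_cancel]
  have hxβ : 0 < x ^ β := Real.rpow_pos_of_pos hxpos β
  nlinarith

lemma neg_one_div_le_neg_one_div_iff {a b : ℝ} (ha : 0 < a) (hb : 0 < b) :
    -1 / a ≤ -1 / b ↔ a ≤ b := by
  rw [neg_div, neg_div, neg_le_neg_iff, one_div_le_one_div hb ha]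

namespace RegVary

variable {f g : ℝ → ℝ} {α β : ℝ}

lemma eventually_ne_zero (hf : RegVary f α) : ∀ᶠ t in atTop, f t ≠ 0 := by
  have h1 := hf 1 one_pos
  simp only [mul_one, Real.one_rpow] at h1
  filter_upwards [h1.eventually_ne one_ne_zero] with t ht hzero
  simp [hzero] at ht

lemma eventually_pos (hf : RegVary f α) (hf0 : ∀ᶠ t in atTop, 0 ≤ f t) :
    ∀ᶠ t in atTop, 0 < f t := by
  filter_upwards [hf0, hf.eventually_ne_zero] with t h0 hne
  exact h0.lt_of_ne' hne

lemma eventually_le_mul (hf : RegVary f α) (hf0 : ∀ᶠ t in atTop, 0 ≤ f t) {x c : ℝ}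
    (hx : 0 < x) (hc : x ^ α < c) : ∀ᶠ t in atTop, f (t * x) ≤ c * f t := by
  filter_upwards [(hf x hx).eventually (eventually_lt_nhds hc), hf.eventually_pos hf0]
    with t hlt hpos
  exact ((div_lt_iff₀ hpos).mp hlt).le

lemma le_of_eventually_le (hg : RegVary g β) (hf : RegVary f α)
    (hg0 : ∀ᶠ t in atTop, 0 ≤ g t) (hgf : ∀ᶠ t in atTop, g t ≤ f t) : β ≤ α := by
  have hgpos := hg.eventually_pos hg0
  have hfpos : ∀ᶠ t in atTop, 0 < f t := by
    filter_upwards [hgpos, hgf] with t h1 h2 using h1.trans_le h2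
  have hratio : Tendsto (fun t => g (t * 2) / f (t * 2) / (g t / f t)) atTop
      (𝓝 ((2 : ℝ) ^ β / 2 ^ α)) :=
    ((hg 2 two_pos).div (hf 2 two_pos) (Real.rpow_pos_of_pos two_pos α).ne').congr
      fun _ => div_div_div_comm _ _ _ _
  have hle := le_one_of_tendsto_ratio_two (r := fun t => g t / f t)
    (by filter_upwards [hgpos, hfpos] with t h1 h2 using div_pos h1 h2)
    (by filter_upwards [hfpos, hgf] with t h1 h2 using div_le_one_of_le₀ h2 h1.le) hratio
  rw [div_le_one (Real.rpow_pos_of_pos two_pos α)] at hle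
  exact (Real.rpow_le_rpow_left_iff one_lt_two).mp hle

lemma le_of_le_sum {ι : Type*} (s : Finset ι) {g : ι → ℝ → ℝ} {γ : ι → ℝ}
    (hf : RegVary f α) (hg : ∀ i ∈ s, RegVary (g i) (γ i)) (hγ : ∀ i ∈ s, γ i ≤ β)
    (hf0 : ∀ᶠ t in atTop, 0 ≤ f t) (hg0 : ∀ i ∈ s, ∀ᶠ t in atTop, 0 ≤ g i t)
    (hgf : ∀ i ∈ s, ∀ᶠ t in atTop, g i t ≤ f t)
    (hfg : ∀ᶠ t in atTop, f t ≤ ∑ i ∈ s, g i t) : α ≤ β := by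
  refine le_of_eventually_rpow_le_mul_rpow (K := 2 * s.card) ?_
  filter_upwards [eventually_gt_atTop 1] with x hx
  have hx0 : 0 < x := one_pos.trans hx
  have hgrowth : ∀ i ∈ s, ∀ᶠ t in atTop, g i (t * x) ≤ 2 * x ^ β * g i t := fun i hi =>
    (hg i hi).eventually_le_mul (hg0 i hi) hx0 <|
      (Real.rpow_le_rpow_of_exponent_le hx.le (hγ i hi)).trans_lt
        (lt_two_mul_self (Real.rpow_pos_of_pos hx0 β))
  have hbound : ∀ᶠ t in atTop, f (t * x) / f t ≤ 2 * s.card * x ^ β := by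
    filter_upwards [(tendsto_id.atTop_mul_const hx0).eventually hfg,
      (eventually_all_finset s).mpr hgrowth, (eventually_all_finset s).mpr hgf,
      hf.eventually_pos hf0] with t hsum hgrow hle hpos
    rw [div_le_iff₀ hpos]
    calc f (t * x) ≤ ∑ i ∈ s, g i (t * x) := hsum
      _ ≤ ∑ i ∈ s, 2 * x ^ β * f t := Finset.sum_le_sum fun i hi =>
          (hgrow i hi).trans (by gcongr; exact hle i hi)
      _ = 2 * s.card * x ^ β * f t := by rw [Finset.sum_const, nsmul_eq_mul]; ring
  exact le_of_tendsto (hf x hx0) hbound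

end RegVary

lemma setOf_forall_lt_subset_biUnion {Ω ι : Type*} [Fintype ι] [DecidableEq ι]
    (X : ι → Ω → ℝ) (C : Finset ι) (t : ℝ) :
    {ω | ∀ i ∈ C, t < X i ω} ⊆ ⋃ Cb ∈ Finset.univ.filter (C ⊆ ·),
      {ω | (∀ i ∈ Cb, t < X i ω) ∧ ∀ j ∉ Cb, X j ω ≤ t} := by
  intro ω hω
  refine Set.mem_biUnion (x := Finset.univ.filter (t < X · ω)) ?_ ⟨?_, ?_⟩
  · simpa [Finset.subset_iff] using hω
  · simp
  · simp

theorem stmt_1_general {Ω : Type*} [MeasurableSpace Ω] (μ : Measure Ω) [IsProbabilityMeasure μ]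
    (d : ℕ) (X : Fin d → Ω → ℝ) (C : Finset (Fin d))
    (τ : Finset (Fin d) → ℝ) (η : ℝ)
    (hτpos : ∀ Cb : Finset (Fin d), C ⊆ Cb → 0 < τ Cb) (hηpos : 0 < η)
    (hτ : ∀ Cb : Finset (Fin d), C ⊆ Cb →
      RegVary (fun t => (μ {ω | (∀ i ∈ Cb, t < X i ω) ∧ ∀ j ∉ Cb, X j ω ≤ t}).toReal)
        (-1 / τ Cb))
    (hη : RegVary (fun t => (μ {ω | ∀ i ∈ C, t < X i ω}).toReal) (-1 / η)) :
    IsGreatest {x : ℝ | ∃ Cb : Finset (Fin d), C ⊆ Cb ∧ τ Cb = x} η := by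
  set S := Finset.univ.filter (C ⊆ ·)
  have hmemS {Cb : Finset (Fin d)} : Cb ∈ S ↔ C ⊆ Cb := by simp [S]
  have hsub (Cb : Finset (Fin d)) (hCb : C ⊆ Cb) (t : ℝ) :
      (μ {ω | (∀ i ∈ Cb, t < X i ω) ∧ ∀ j ∉ Cb, X j ω ≤ t}).toReal ≤
        (μ {ω | ∀ i ∈ C, t < X i ω}).toReal :=
    measureReal_mono fun ω hω i hi => hω.1 i (hCb hi)
  have hupper (Cb : Finset (Fin d)) (hCb : C ⊆ Cb) : τ Cb ≤ η :=
    (neg_one_div_le_neg_one_div_iff (hτpos Cb hCb) hηpos).mp <|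
      (hτ Cb hCb).le_of_eventually_le hη (.of_forall fun _ => ENNReal.toReal_nonneg)
        (.of_forall (hsub Cb hCb))
  obtain ⟨Cm, hCmS, hCm_max⟩ := S.exists_max_image τ ⟨C, hmemS.mpr subset_rfl⟩
  have hCm := hmemS.mp hCmS
  have hindex_le (Cb : Finset (Fin d)) (hCb : Cb ∈ S) : -1 / τ Cb ≤ -1 / τ Cm :=
    (neg_one_div_le_neg_one_div_iff (hτpos Cb (hmemS.mp hCb)) (hτpos Cm hCm)).mpr
      (hCm_max Cb hCb)
  have hcover (t : ℝ) : (μ {ω | ∀ i ∈ C, t < X i ω}).toReal ≤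
      ∑ Cb ∈ S, (μ {ω | (∀ i ∈ Cb, t < X i ω) ∧ ∀ j ∉ Cb, X j ω ≤ t}).toReal :=
    (measureReal_mono (setOf_forall_lt_subset_biUnion X C t) (measure_ne_top μ _)).trans
      (measureReal_biUnion_finset_le S _)
  have hlower : η ≤ τ Cm :=
    (neg_one_div_le_neg_one_div_iff hηpos (hτpos Cm hCm)).mp <|
      hη.le_of_le_sum S (fun Cb hCb => hτ Cb (hmemS.mp hCb)) hindex_le
        (.of_forall fun _ => ENNReal.toReal_nonneg)
        (fun _ _ => .of_forall fun _ => ENNReal.toReal_nonneg)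
        (fun Cb hCb => .of_forall (hsub Cb (hmemS.mp hCb))) (.of_forall hcover)
  exact ⟨⟨Cm, hCm, le_antisymm (hupper Cm hCm) hlower⟩,
    fun _ ⟨Cb, hCb, hx⟩ => hx ▸ hupper Cb hCb⟩

/-- If for each `C̄` with `C ⊆ C̄ ⊆ D` the function
`t ↦ pr(min_{i ∈ C̄} X_i > t, max_{j ∈ D \ C̄} X_j ≤ t)` is regularly varying with index
`−1/τ_C̄`, and `t ↦ pr(min_{i ∈ C} X_i > t)` is regularly varying with index `−1/η_C`,
then `η_C = max_{C̄ ⊇ C} τ_C̄`. -/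
theorem stmt_1 {Ω : Type*} [MeasurableSpace Ω] (μ : Measure Ω) [IsProbabilityMeasure μ]
    (d : ℕ) (X : Fin d → Ω → ℝ) (C : Finset (Fin d)) (hC : C.Nonempty)
    (τ : Finset (Fin d) → ℝ) (η : ℝ)
    (hτpos : ∀ Cb : Finset (Fin d), C ⊆ Cb → 0 < τ Cb) (hηpos : 0 < η)
    (hτ : ∀ Cb : Finset (Fin d), C ⊆ Cb →
      RegVary (fun t => (μ {ω | (∀ i ∈ Cb, t < X i ω) ∧ ∀ j ∉ Cb, X j ω ≤ t}).toReal)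
        (-1 / τ Cb))
    (hη : RegVary (fun t => (μ {ω | ∀ i ∈ C, t < X i ω}).toReal) (-1 / η)) :
    IsGreatest {x : ℝ | ∃ Cb : Finset (Fin d), C ⊆ Cb ∧ τ Cb = x} η :=
  stmt_1_general μ d X C τ η hτpos hηpos hτ hη
end

section
/- Let (X_1,X_2,X_3) have the trivariate inverted logistic distribution with parameter α ∈ (0,1) as above, and let δ ∈ (0,1). Then as t → ∞, pr(X_1 > t, X_2 < t^δ, X_3 < t^δ) ∼ t^{−1} − 2 t^{−(1+δ^{1/α})^α} + t^{−(1+2δ^{1/α})^α} ∼ t^{−1}; in particular the probability is regularly varying with index −1, i.e. τ_1(δ) = 1. -/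
/-!
The event `{X₁ > t, X₂ < t^δ, X₃ < t^δ}` lies inside `{X₁ > t}` and, with `s = t^δ / 2`, its
complement in `{X₁ > t}` is covered by `{X₁ > t, X₂ > s} ∪ {X₁ > t, X₃ > s}`. The marginal tail
`1 - exp (-1/t)` is `∼ 1/t`. Since `-log (1 - exp (-1/x)) ≥ log x`, each of the two joint tails is at
most `t ^ (-(1 + (δ/2)^(1/α))^α)`, whose exponent is `< -1`, so they are `o(1/t)`. Hence the
probability is `∼ 1/t`, and a function asymptotic to `c t^ρ` with `c ≠ 0` is regularly varying with
index `ρ`.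
-/

open Filter MeasureTheory

open Real Topology

lemma tendsto_mul_one_sub_exp_neg_inv :
    Tendsto (fun t : ℝ => t * (1 - exp (-1 / t))) atTop (𝓝 1) := by
  have hslope := (hasDerivAt_exp 0).tendsto_slope_zero_left
  rw [exp_zero] at hslope
  refine (hslope.comp (tendsto_inv_atBot_nhdsLT_zero.comp tendsto_neg_atTop_atBot)).congr
    fun t => ?_
  simp only [Function.comp_apply, inv_inv, zero_add, smul_eq_mul, neg_div, one_div, inv_neg]
  ring

noncomputable def frechetNegLogSurv (x : ℝ) : ℝ := -log (1 - exp (-1 / x))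

lemma log_le_frechetNegLogSurv {x : ℝ} (hx : 0 < x) : log x ≤ frechetNegLogSurv x := by
  have hpos : 0 < 1 - exp (-1 / x) := by
    rw [sub_pos, exp_lt_one_iff]
    exact div_neg_of_neg_of_pos neg_one_lt_zero hx
  have hle : 1 - exp (-1 / x) ≤ x⁻¹ := by
    linarith [add_one_le_exp (-1 / x), show -1 / x = -x⁻¹ by ring]
  have := log_le_log hpos hle
  rw [log_inv] at this
  unfold frechetNegLogSurv
  linarith

lemma mul_le_rpow_add_rpow_rpow {α κ L a b : ℝ} (hα : 0 < α) (hκ : 0 ≤ κ) (hL : 0 ≤ L)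
    (ha : L ≤ a) (hb : κ * L ≤ b) :
    (1 + κ ^ (1 / α)) ^ α * L ≤ (a ^ (1 / α) + b ^ (1 / α)) ^ α := by
  have hL' : L = (L ^ (1 / α)) ^ α := by
    rw [← rpow_mul hL, one_div, inv_mul_cancel₀ hα.ne', rpow_one]
  calc (1 + κ ^ (1 / α)) ^ α * L = (L ^ (1 / α) + (κ * L) ^ (1 / α)) ^ α := by
        rw [mul_rpow hκ hL, ← one_add_mul, mul_rpow (by positivity) (by positivity), ← hL',
          mul_comm]
    _ ≤ (a ^ (1 / α) + b ^ (1 / α)) ^ α := by gcongr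

lemma tendsto_mul_exp_neg_of_mul_log_le {g : ℝ → ℝ} {c : ℝ} (hc : 1 < c)
    (hg : ∀ᶠ t in atTop, c * log t ≤ g t) :
    Tendsto (fun t => t * exp (-g t)) atTop (𝓝 0) := by
  have hlim : Tendsto (fun t : ℝ => t ^ (-(c - 1))) atTop (𝓝 0) :=
    tendsto_rpow_neg_atTop (by linarith)
  refine tendsto_of_tendsto_of_tendsto_of_le_of_le' tendsto_const_nhds hlim ?_ ?_
  · filter_upwards [eventually_ge_atTop 0] with t ht
    positivity
  · filter_upwards [hg, eventually_gt_atTop 0] with t hgt ht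
    calc t * exp (-g t) ≤ t * exp (-(c * log t)) := by gcongr
      _ = t ^ (-(c - 1)) := by
        rw [rpow_def_of_pos ht, ← exp_log ht, log_exp, ← exp_add]
        ring_nf

lemma eventually_mul_log_le_logistic {α δ : ℝ} (hα : 0 < α) (hδ : 0 < δ) :
    ∀ᶠ t in atTop, (1 + (δ / 2) ^ (1 / α)) ^ α * log t ≤
      (frechetNegLogSurv t ^ (1 / α) + frechetNegLogSurv (t ^ δ / 2) ^ (1 / α)) ^ α := by
  filter_upwards [eventually_ge_atTop 1,
    tendsto_log_atTop.eventually_ge_atTop (2 / δ * log 2)] with t ht hlog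
  have ht0 : 0 < t := one_pos.trans_le ht
  refine mul_le_rpow_add_rpow_rpow hα (by positivity) (log_nonneg ht)
    (log_le_frechetNegLogSurv ht0) ?_
  calc δ / 2 * log t ≤ log (t ^ δ / 2) := by
        rw [log_div (by positivity) two_ne_zero, log_rpow ht0]
        have : log 2 ≤ δ / 2 * log t := by
          calc log 2 = δ / 2 * (2 / δ * log 2) := by field_simp
            _ ≤ δ / 2 * log t := by gcongr
        linarith
    _ ≤ frechetNegLogSurv (t ^ δ / 2) := log_le_frechetNegLogSurv (by positivity)

noncomputable def invLogisticSurv (α x y : ℝ) : ℝ :=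
  exp (-(frechetNegLogSurv x ^ (1 / α) + frechetNegLogSurv y ^ (1 / α)) ^ α)

lemma invLogisticSurv_nonneg {α x y : ℝ} : 0 ≤ invLogisticSurv α x y := exp_nonneg _

lemma tendsto_mul_invLogisticSurv {α δ : ℝ} (hα : 0 < α) (hδ : 0 < δ) :
    Tendsto (fun t => t * invLogisticSurv α t (t ^ δ / 2)) atTop (𝓝 0) := by
  refine tendsto_mul_exp_neg_of_mul_log_le ?_ (eventually_mul_log_le_logistic hα hδ)
  exact one_lt_rpow (lt_add_of_pos_right 1 (by positivity)) hα

theorem RegVary.of_tendsto_div_rpow {f : ℝ → ℝ} {ρ c : ℝ} (hc : c ≠ 0)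
    (h : Tendsto (fun t => f t / t ^ ρ) atTop (𝓝 c)) : RegVary f ρ := by
  intro x hx
  have hscaled : Tendsto (fun t => f (t * x) / (t * x) ^ ρ) atTop (𝓝 c) :=
    h.comp (tendsto_id.atTop_mul_const hx)
  have hquot := (hscaled.div h hc).mul_const (x ^ ρ)
  rw [div_self hc, one_mul] at hquot
  refine hquot.congr' ?_
  filter_upwards [eventually_gt_atTop 0] with t ht
  rw [Pi.div_apply, mul_rpow ht.le hx.le]
  have : t ^ ρ ≠ 0 := (rpow_pos_of_pos ht ρ).ne'
  have : x ^ ρ ≠ 0 := (rpow_pos_of_pos hx ρ).ne'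
  by_cases hft : f t = 0
  · simp [hft]
  · field_simp

section Sandwich

variable {Ω : Type*} [MeasurableSpace Ω] {μ : Measure Ω} [IsFiniteMeasure μ] {X₁ X₂ X₃ : Ω → ℝ}

lemma measureReal_le_tail {t u : ℝ} :
    μ.real {ω | t < X₁ ω ∧ X₂ ω < u ∧ X₃ ω < u} ≤ μ.real {ω | t < X₁ ω} :=
  measureReal_mono fun _ hω => hω.1

lemma measureReal_tail_sub_le {t s u : ℝ} (hsu : s < u) :
    μ.real {ω | t < X₁ ω} - μ.real {ω | t < X₁ ω ∧ s < X₂ ω} -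
        μ.real {ω | t < X₁ ω ∧ s < X₃ ω} ≤
      μ.real {ω | t < X₁ ω ∧ X₂ ω < u ∧ X₃ ω < u} := by
  have hcover : {ω | t < X₁ ω} ⊆ {ω | t < X₁ ω ∧ X₂ ω < u ∧ X₃ ω < u} ∪
      {ω | t < X₁ ω ∧ s < X₂ ω} ∪ {ω | t < X₁ ω ∧ s < X₃ ω} := by
    intro ω hω
    simp only [Set.mem_union, Set.mem_ofPred_eq] at hω ⊢
    rcases lt_or_ge (X₂ ω) u with h₂ | h₂ <;> rcases lt_or_ge (X₃ ω) u with h₃ | h₃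
    exacts [Or.inl (Or.inl ⟨hω, h₂, h₃⟩), Or.inr ⟨hω, hsu.trans_le h₃⟩,
      Or.inl (Or.inr ⟨hω, hsu.trans_le h₂⟩), Or.inr ⟨hω, hsu.trans_le h₃⟩]
  have := (measureReal_mono (μ := μ) hcover).trans
    ((measureReal_union_le _ _).trans (add_le_add_left (measureReal_union_le _ _) _))
  linarith

theorem tendsto_measureReal_mul_self {α δ : ℝ} (hα : 0 < α) (hδ : 0 < δ)
    (hmarg : ∀ x : ℝ, 0 < x → μ {ω | x < X₁ ω} = ENNReal.ofReal (1 - exp (-1 / x)))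
    (hsurv2 : ∀ x y : ℝ, 0 < x → 0 < y →
      μ {ω | x < X₁ ω ∧ y < X₂ ω} = ENNReal.ofReal (invLogisticSurv α x y))
    (hsurv2' : ∀ x z : ℝ, 0 < x → 0 < z →
      μ {ω | x < X₁ ω ∧ z < X₃ ω} = ENNReal.ofReal (invLogisticSurv α x z)) :
    Tendsto (fun t => μ.real {ω | t < X₁ ω ∧ X₂ ω < t ^ δ ∧ X₃ ω < t ^ δ} * t) atTop (𝓝 1) := by
  have hmarg_real : ∀ t : ℝ, 0 < t → μ.real {ω | t < X₁ ω} = 1 - exp (-1 / t) := fun t ht => by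
    have : exp (-1 / t) ≤ 1 :=
      exp_le_one_iff.mpr (div_nonpos_of_nonpos_of_nonneg (by norm_num) ht.le)
    rw [measureReal_def, hmarg t ht, ENNReal.toReal_ofReal (by linarith)]
  have hupper : ∀ᶠ t in atTop,
      μ.real {ω | t < X₁ ω ∧ X₂ ω < t ^ δ ∧ X₃ ω < t ^ δ} * t ≤ t * (1 - exp (-1 / t)) := by
    filter_upwards [eventually_gt_atTop 0] with t ht
    rw [mul_comm, ← hmarg_real t ht]
    exact mul_le_mul_of_nonneg_left measureReal_le_tail ht.le
  -- The hypotheses only give strict tails, so `X₂ ω ≥ t ^ δ` is caught by `t ^ δ / 2 < X₂ ω`.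
  have hlower : ∀ᶠ t in atTop,
      t * (1 - exp (-1 / t)) - t * invLogisticSurv α t (t ^ δ / 2) -
          t * invLogisticSurv α t (t ^ δ / 2) ≤
        μ.real {ω | t < X₁ ω ∧ X₂ ω < t ^ δ ∧ X₃ ω < t ^ δ} * t := by
    filter_upwards [eventually_gt_atTop 0] with t ht
    have hs : 0 < t ^ δ / 2 := by positivity
    have h : _ - _ - _ ≤ μ.real {ω | t < X₁ ω ∧ X₂ ω < t ^ δ ∧ X₃ ω < t ^ δ} :=
      measureReal_tail_sub_le (half_lt_self (by positivity))
    rw [hmarg_real t ht, measureReal_def, measureReal_def, hsurv2 t _ ht hs, hsurv2' t _ ht hs,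
      ENNReal.toReal_ofReal invLogisticSurv_nonneg] at h
    nlinarith
  have hlim := (tendsto_mul_one_sub_exp_neg_inv.sub (tendsto_mul_invLogisticSurv hα hδ)).sub
    (tendsto_mul_invLogisticSurv hα hδ)
  rw [sub_zero, sub_zero] at hlim
  exact tendsto_of_tendsto_of_tendsto_of_le_of_le' hlim tendsto_mul_one_sub_exp_neg_inv
    hlower hupper

end Sandwich

theorem stmt_9_general {Ω : Type*} [MeasurableSpace Ω] (μ : Measure Ω) [IsProbabilityMeasure μ]
    (X₁ X₂ X₃ : Ω → ℝ) (α : ℝ) (hα : 0 < α)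
    (hmarg : ∀ x : ℝ, 0 < x →
      μ {ω | x < X₁ ω} = ENNReal.ofReal (1 - Real.exp (-1 / x)))
    (hsurv2 : ∀ x y : ℝ, 0 < x → 0 < y →
      μ {ω | x < X₁ ω ∧ y < X₂ ω} =
        ENNReal.ofReal (Real.exp (-((-Real.log (1 - Real.exp (-1 / x))) ^ (1 / α) +
          (-Real.log (1 - Real.exp (-1 / y))) ^ (1 / α)) ^ α)))
    (hsurv2' : ∀ x z : ℝ, 0 < x → 0 < z →
      μ {ω | x < X₁ ω ∧ z < X₃ ω} =
        ENNReal.ofReal (Real.exp (-((-Real.log (1 - Real.exp (-1 / x))) ^ (1 / α) +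
          (-Real.log (1 - Real.exp (-1 / z))) ^ (1 / α)) ^ α)))
    (δ : ℝ) (hδ : 0 < δ) :
    Tendsto (fun t : ℝ =>
        (μ {ω | t < X₁ ω ∧ X₂ ω < t ^ δ ∧ X₃ ω < t ^ δ}).toReal / t ^ (-1 : ℝ))
      atTop (nhds 1) ∧
    RegVary (fun t => (μ {ω | t < X₁ ω ∧ X₂ ω < t ^ δ ∧ X₃ ω < t ^ δ}).toReal) (-1) := by
  have hlim : Tendsto (fun t : ℝ =>
      (μ {ω | t < X₁ ω ∧ X₂ ω < t ^ δ ∧ X₃ ω < t ^ δ}).toReal / t ^ (-1 : ℝ)) atTop (𝓝 1) :=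
    (tendsto_measureReal_mul_self hα hδ hmarg hsurv2 hsurv2').congr fun t => by
      rw [rpow_neg_one, div_inv_eq_mul, measureReal_def]
  exact ⟨hlim, .of_tendsto_div_rpow one_ne_zero hlim⟩

/-- For the trivariate inverted logistic distribution with parameter `α ∈ (0,1)` and
`δ ∈ (0,1)`: `pr(X₁ > t, X₂ < t^δ, X₃ < t^δ) ∼ t^{−1}` as `t → ∞`; in particular this
probability is regularly varying with index `−1`, i.e. `τ₁(δ) = 1`. -/
theorem stmt_9 {Ω : Type*} [MeasurableSpace Ω] (μ : Measure Ω) [IsProbabilityMeasure μ]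
    (X₁ X₂ X₃ : Ω → ℝ) (α : ℝ) (hα : 0 < α) (hα1 : α < 1)
    (hmarg : ∀ x : ℝ, 0 < x →
      μ {ω | x < X₁ ω} = ENNReal.ofReal (1 - Real.exp (-1 / x)))
    (hsurv2 : ∀ x y : ℝ, 0 < x → 0 < y →
      μ {ω | x < X₁ ω ∧ y < X₂ ω} =
        ENNReal.ofReal (Real.exp (-((-Real.log (1 - Real.exp (-1 / x))) ^ (1 / α) +
          (-Real.log (1 - Real.exp (-1 / y))) ^ (1 / α)) ^ α)))
    (hsurv2' : ∀ x z : ℝ, 0 < x → 0 < z →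
      μ {ω | x < X₁ ω ∧ z < X₃ ω} =
        ENNReal.ofReal (Real.exp (-((-Real.log (1 - Real.exp (-1 / x))) ^ (1 / α) +
          (-Real.log (1 - Real.exp (-1 / z))) ^ (1 / α)) ^ α)))
    (hsurv3 : ∀ x y z : ℝ, 0 < x → 0 < y → 0 < z →
      μ {ω | x < X₁ ω ∧ y < X₂ ω ∧ z < X₃ ω} =
        ENNReal.ofReal (Real.exp (-((-Real.log (1 - Real.exp (-1 / x))) ^ (1 / α) +
          (-Real.log (1 - Real.exp (-1 / y))) ^ (1 / α) +
          (-Real.log (1 - Real.exp (-1 / z))) ^ (1 / α)) ^ α)))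
    (δ : ℝ) (hδ : 0 < δ) (hδ1 : δ < 1) :
    Tendsto (fun t : ℝ =>
        (μ {ω | t < X₁ ω ∧ X₂ ω < t ^ δ ∧ X₃ ω < t ^ δ}).toReal / t ^ (-1 : ℝ))
      atTop (nhds 1) ∧
    RegVary (fun t => (μ {ω | t < X₁ ω ∧ X₂ ω < t ^ δ ∧ X₃ ω < t ^ δ}).toReal) (-1) :=
  stmt_9_general μ X₁ X₂ X₃ α hα hmarg hsurv2 hsurv2' δ hδ
end

section
/- In the inequality above for a 3×3 positive definite correlation matrix, equivalently: the quantity η_{123} := (1_3^T Σ^{−1} 1_3)^{−1} satisfies η_{123} ≤ η_{12} := (1+ρ_{12})/2, with equality if and only if 1+ρ_{12} = ρ_{13}+ρ_{23}; and by symmetry η_{123} ≤ min_{i<j} (1+ρ_{ij})/2. -/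
/-!
By Cramer's rule `η₁₂₃ = det Σ / 1ᵀ adj(Σ) 1`, and the polynomial identity
`2 det Σ - (1 + ρ₁₂) 1ᵀ adj(Σ) 1 = -(1 - ρ₁₂)(1 + ρ₁₂ - ρ₁₃ - ρ₂₃)²` gives both the bound and its
equality case, because `ρ₁₂ < 1` for a positive definite correlation matrix. Both `det Σ` and
`1ᵀ adj(Σ) 1` are symmetric in the three correlations, which gives the bounds by `η₁₃` and `η₂₃`.
-/

open Matrix

theorem Matrix.PosDef.apply_lt_one_of_diag_eq_one {n : Type*} [Fintype n] [DecidableEq n]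
    {S : Matrix n n ℝ} (hS : S.PosDef) (hdiag : ∀ i, S i i = 1) {i j : n} (hij : i ≠ j) :
    S i j < 1 := by
  have hx : Pi.single i 1 - Pi.single j 1 ≠ (0 : n → ℝ) := by
    intro h
    simpa [hij] using congrFun h i
  have hsymm : S j i = S i j := by simpa using congrFun₂ hS.isHermitian i j
  have hpos := hS.dotProduct_mulVec_pos hx
  simp only [star_trivial, mulVec_sub, mulVec_single, MulOpposite.op_one, one_smul,
    dotProduct_sub, sub_dotProduct, single_dotProduct, col_apply, hdiag, mul_one, hsymm, one_mul,
    sub_pos] at hpos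
  linarith

def corrDet (a b c : ℝ) : ℝ := 1 + 2 * a * b * c - a ^ 2 - b ^ 2 - c ^ 2

def corrAdjSum (a b c : ℝ) : ℝ :=
  3 - a ^ 2 - b ^ 2 - c ^ 2 + 2 * (a * b + a * c + b * c) - 2 * (a + b + c)

theorem det_corr (a b c : ℝ) : det !![1, a, b; a, 1, c; b, c, 1] = corrDet a b c := by
  rw [det_fin_three, corrDet]
  simp only [Fin.isValue, of_apply, cons_val', cons_val_zero, cons_val_fin_one, cons_val_one,
    mul_one, cons_val, one_mul]
  ring

theorem one_dotProduct_inv_corr_mulVec_one (a b c : ℝ) :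
    (fun _ : Fin 3 => (1 : ℝ)) ⬝ᵥ (!![1, a, b; a, 1, c; b, c, 1]⁻¹ *ᵥ fun _ => 1) =
      corrAdjSum a b c / corrDet a b c := by
  rw [inv_def, det_corr, smul_mulVec, dotProduct_smul, Ring.inverse_eq_inv', smul_eq_mul,
    div_eq_inv_mul, corrAdjSum, adjugate_fin_three]
  congr 1
  simp only [dotProduct, mulVec, Fin.isValue, of_apply, cons_val', cons_val_one, cons_val_zero,
    cons_val_fin_one, cons_val, mul_one, one_mul, Fin.sum_univ_three]
  ring

theorem two_mul_corrDet_sub (a b c : ℝ) :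
    2 * corrDet a b c - (1 + a) * corrAdjSum a b c = -((1 - a) * (1 + a - b - c) ^ 2) := by
  rw [corrDet, corrAdjSum]
  ring

theorem corrDet_swap (a b c : ℝ) : corrDet b a c = corrDet a b c := by
  rw [corrDet, corrDet]
  ring

theorem corrDet_rotate (a b c : ℝ) : corrDet c a b = corrDet a b c := by
  rw [corrDet, corrDet]
  ring

theorem corrAdjSum_swap (a b c : ℝ) : corrAdjSum b a c = corrAdjSum a b c := by
  rw [corrAdjSum, corrAdjSum]
  ring

theorem corrAdjSum_rotate (a b c : ℝ) : corrAdjSum c a b = corrAdjSum a b c := by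
  rw [corrAdjSum, corrAdjSum]
  ring

section

variable {a b c : ℝ} (ha : a < 1) (hN : 0 < corrAdjSum a b c)
include ha hN

theorem corrDet_div_le : corrDet a b c / corrAdjSum a b c ≤ (1 + a) / 2 := by
  rw [div_le_div_iff₀ hN two_pos]
  nlinarith [two_mul_corrDet_sub a b c,
    mul_nonneg (sub_nonneg.2 ha.le) (sq_nonneg (1 + a - b - c))]

theorem corrDet_div_eq_iff :
    corrDet a b c / corrAdjSum a b c = (1 + a) / 2 ↔ 1 + a = b + c := by
  rw [div_eq_div_iff hN.ne' two_ne_zero, ← sub_eq_zero, mul_comm, two_mul_corrDet_sub,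
    neg_eq_zero, mul_eq_zero_iff_left (sub_ne_zero.2 ha.ne'), sq_eq_zero_iff, sub_sub,
    sub_eq_zero]

end

/-- For a 3×3 positive definite correlation matrix, `η₁₂₃ := (1₃ᵀ Σ⁻¹ 1₃)⁻¹` satisfies
`η₁₂₃ ≤ η₁₂ := (1+ρ₁₂)/2`, with equality iff `1+ρ₁₂ = ρ₁₃+ρ₂₃`; and by symmetry
`η₁₂₃ ≤ min_{i<j} (1+ρᵢⱼ)/2`. -/
theorem stmt_11 (ρ₁₂ ρ₁₃ ρ₂₃ : ℝ)
    (S : Matrix (Fin 3) (Fin 3) ℝ)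
    (hS : S = !![1, ρ₁₂, ρ₁₃; ρ₁₂, 1, ρ₂₃; ρ₁₃, ρ₂₃, 1])
    (hpos : S.PosDef)
    (η₁₂₃ : ℝ) (hη : η₁₂₃ = ((fun _ : Fin 3 => (1 : ℝ)) ⬝ᵥ (S⁻¹ *ᵥ fun _ => 1))⁻¹) :
    η₁₂₃ ≤ (1 + ρ₁₂) / 2 ∧
    (η₁₂₃ = (1 + ρ₁₂) / 2 ↔ 1 + ρ₁₂ = ρ₁₃ + ρ₂₃) ∧
    η₁₂₃ ≤ min (min ((1 + ρ₁₂) / 2) ((1 + ρ₁₃) / 2)) ((1 + ρ₂₃) / 2) := by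
  subst hS hη
  have hdiag : ∀ i, !![1, ρ₁₂, ρ₁₃; ρ₁₂, 1, ρ₂₃; ρ₁₃, ρ₂₃, 1] i i = 1 := by
    intro i; fin_cases i <;> rfl
  have h₁₂ : ρ₁₂ < 1 := hpos.apply_lt_one_of_diag_eq_one hdiag (i := 0) (j := 1) (by decide)
  have h₁₃ : ρ₁₃ < 1 := hpos.apply_lt_one_of_diag_eq_one hdiag (i := 0) (j := 2) (by decide)
  have h₂₃ : ρ₂₃ < 1 := hpos.apply_lt_one_of_diag_eq_one hdiag (i := 1) (j := 2) (by decide)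
  have hdet : 0 < corrDet ρ₁₂ ρ₁₃ ρ₂₃ := det_corr ρ₁₂ ρ₁₃ ρ₂₃ ▸ hpos.det_pos
  have hN : 0 < corrAdjSum ρ₁₂ ρ₁₃ ρ₂₃ := by
    have h := hpos.inv.dotProduct_mulVec_pos (x := fun _ => 1) (Function.ne_iff.2 ⟨0, one_ne_zero⟩)
    rw [star_trivial, one_dotProduct_inv_corr_mulVec_one] at h
    exact (div_pos_iff_of_pos_right hdet).1 h
  rw [one_dotProduct_inv_corr_mulVec_one, inv_div]
  have le₁₂ := corrDet_div_le h₁₂ hN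
  have le₁₃ := corrDet_div_le (b := ρ₁₂) (c := ρ₂₃) h₁₃ (by rwa [corrAdjSum_swap])
  have le₂₃ := corrDet_div_le (b := ρ₁₂) (c := ρ₁₃) h₂₃ (by rwa [corrAdjSum_rotate])
  rw [corrDet_swap, corrAdjSum_swap] at le₁₃
  rw [corrDet_rotate, corrAdjSum_rotate] at le₂₃
  exact ⟨le₁₂, corrDet_div_eq_iff h₁₂ hN, le_min (le_min le₁₂ le₁₃) le₂₃⟩
end
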